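/- Under the Logit model with constant unit costs, if p_f are profit-maximizing prices for firm f (all finite and interior), then for any two products j, k offered by firm f: (p_j - c_j) - (p_k - c_k) = -(1/w_j'(p_j) - 1/w_k'(p_k)). In particular, if w_j = w_k = w is a common, separable, strictly concave-in-price utility and c_j > c_k, then the profit-optimal markup of the higher-cost product is strictly lower: p_j - c_j < p_k - c_k. -/

import Mathlib

/-! Moving only the price `x` of a product `j` of the firm, the firm's profit has the form
`(B + e^{u(x)} (x - c_j)) / (A + e^{u(x)})` with `u = w_j + v_j`; its first-order condition at the
optimum reads `p_j - c_j + 1 / w_j'(p_j) = π̂_f`. The right side does not depend on `j`, which gives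
the markup identity. With a common strictly decreasing `w' < 0`, a higher-cost product whose markup
were not lower would have a higher price, hence a more negative `w'`, and the identity would force
its markup to be lower after all. -/

open Filter Set

noncomputable def logitP17 {J : ℕ} (w : Fin J → ℝ → ℝ) (v : Fin J → ℝ) (θ : ℝ)
    (p : Fin J → ℝ) (j : Fin J) : ℝ :=
  Real.exp (w j (p j) + v j) / (Real.exp θ + ∑ k, Real.exp (w k (p k) + v k))

noncomputable def profit17 {J : ℕ} (w : Fin J → ℝ → ℝ) (v : Fin J → ℝ) (θ : ℝ)
    (c : Fin J → ℝ) (Jf : Finset (Fin J)) (p : Fin J → ℝ) : ℝ :=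
  ∑ j ∈ Jf, logitP17 w v θ p j * (p j - c j)

open Real Finset Function

theorem Finset.sum_apply_update_of_mem {ι α M : Type*} [DecidableEq ι] [AddCommMonoid M]
    {s : Finset ι} {j : ι} (hj : j ∈ s) (f : ι → α → M) (p : ι → α) (x : α) :
    ∑ i ∈ s, f i (update p j x i) = f j x + ∑ i ∈ s \ {j}, f i (p i) := by
  simp_rw [apply_update f]
  exact sum_update_of_mem hj _ _

theorem isLocalMax_logit_ratio_foc {u : ℝ → ℝ} {u' A B c x₀ : ℝ} (hu : HasDerivAt u u' x₀)
    (hD : A + exp (u x₀) ≠ 0)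
    (hmax : IsLocalMax (fun x => (B + exp (u x) * (x - c)) / (A + exp (u x))) x₀) :
    u' * (x₀ - c) + 1 = (B + exp (u x₀) * (x₀ - c)) / (A + exp (u x₀)) * u' := by
  have he := hu.exp
  have hQ := ((he.mul ((hasDerivAt_id x₀).sub_const c)).const_add B).div (he.const_add A) hD
  have h0 := hmax.hasDerivAt_eq_zero hQ
  rw [div_eq_zero_iff, or_iff_left (pow_ne_zero 2 hD)] at h0
  have hpos := exp_pos (u x₀)
  field_simp
  simp only [id, Pi.mul_apply] at h0
  apply mul_left_cancel₀ hpos.ne'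
  linear_combination h0

theorem profit17_update {J : ℕ} (w : Fin J → ℝ → ℝ) (v : Fin J → ℝ) (θ : ℝ)
    (c : Fin J → ℝ) {Jf : Finset (Fin J)} {j : Fin J} (hj : j ∈ Jf) (p : Fin J → ℝ) (x : ℝ) :
    profit17 w v θ c Jf (update p j x) =
      (∑ i ∈ Jf \ {j}, exp (w i (p i) + v i) * (p i - c i) + exp (w j x + v j) * (x - c j)) /
      (exp θ + ∑ k ∈ univ \ {j}, exp (w k (p k) + v k) + exp (w j x + v j)) := by
  have hnum := sum_apply_update_of_mem hj (fun i y => exp (w i y + v i) * (y - c i)) p x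
  have hden := sum_apply_update_of_mem (mem_univ j) (fun k y => exp (w k y + v k)) p x
  simp only [profit17, logitP17, div_mul_eq_mul_div, ← sum_div] at hnum hden ⊢
  rw [hnum, hden]
  ring

theorem isLocalMax_profit17_update {J : ℕ} {w : Fin J → ℝ → ℝ} {v : Fin J → ℝ} {θ : ℝ}
    {c : Fin J → ℝ} {Jf : Finset (Fin J)} {p : Fin J → ℝ} (hp : ∀ i, 0 ≤ p i)
    (hmax : ∀ q : Fin J → ℝ, (∀ i, i ∉ Jf → q i = p i) → (∀ i, 0 ≤ q i) →
      profit17 w v θ c Jf q ≤ profit17 w v θ c Jf p)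
    {j : Fin J} (hj : j ∈ Jf) (hpj : 0 < p j) :
    IsLocalMax (fun x => profit17 w v θ c Jf (update p j x)) (p j) := by
  filter_upwards [eventually_gt_nhds hpj] with x hx
  rw [update_eq_self]
  refine hmax _ (fun i hi => update_of_ne (ne_of_mem_of_not_mem hj hi).symm x p) fun i => ?_
  rcases eq_or_ne i j with rfl | hij
  · simpa using hx.le
  · simpa [hij] using hp i

theorem markup_add_inv_eq_profit17 {J : ℕ} {w : Fin J → ℝ → ℝ} {v : Fin J → ℝ} {θ : ℝ}
    {c : Fin J → ℝ} {Jf : Finset (Fin J)} {p : Fin J → ℝ} (hp : ∀ i, 0 ≤ p i)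
    (hmax : ∀ q : Fin J → ℝ, (∀ i, i ∉ Jf → q i = p i) → (∀ i, 0 ≤ q i) →
      profit17 w v θ c Jf q ≤ profit17 w v θ c Jf p)
    {j : Fin J} (hj : j ∈ Jf) (hpj : 0 < p j) {d : ℝ} (hd : HasDerivAt (w j) d (p j)) :
    p j - c j + d⁻¹ = profit17 w v θ c Jf p := by
  have hloc := isLocalMax_profit17_update hp hmax hj hpj
  simp_rw [profit17_update w v θ c hj] at hloc
  have foc := isLocalMax_logit_ratio_foc (hd.add_const (v j)) (by positivity) hloc
  rw [← profit17_update w v θ c hj, update_eq_self] at foc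
  have hd0 : d ≠ 0 := by
    rintro rfl
    simp at foc
  field_simp
  linarith

theorem markup_lt_of_cost_lt {g : ℝ → ℝ} (hg : StrictAntiOn g (Ioi 0)) {a b ca cb : ℝ}
    (ha : 0 < a) (hb : 0 < b) (hgb : g b < 0) (hc : cb < ca)
    (h : a - ca + (g a)⁻¹ = b - cb + (g b)⁻¹) : a - ca < b - cb := by
  by_contra! hle
  have hga : g a < g b := hg hb ha (by linarith)
  have := (inv_lt_inv_of_neg hgb (hga.trans hgb)).mpr hga
  linarith

theorem stmt_17_general {J : ℕ} (w w' : Fin J → ℝ → ℝ) (v : Fin J → ℝ) (θ : ℝ)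
    (c : Fin J → ℝ) (Jf : Finset (Fin J))
    (hd : ∀ k : Fin J, ∀ x > (0:ℝ), HasDerivAt (w k) (w' k x) x)
    (hneg : ∀ k : Fin J, ∀ x > (0:ℝ), w' k x < 0)
    (p : Fin J → ℝ) (hp : ∀ i, 0 < p i)
    -- p_f are (interior) profit-maximizing prices for firm f
    (hmax : ∀ q : Fin J → ℝ, (∀ i, i ∉ Jf → q i = p i) → (∀ i, 0 ≤ q i) →
      profit17 w v θ c Jf q ≤ profit17 w v θ c Jf p) :
    -- markup-difference identity
    (∀ j ∈ Jf, ∀ k ∈ Jf,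
      (p j - c j) - (p k - c k) = -((w' j (p j))⁻¹ - (w' k (p k))⁻¹)) ∧
    -- common separable, strictly concave-in-price utility: higher cost ⇒ lower markup
    (∀ w0 w0' : ℝ → ℝ, (∀ j ∈ Jf, w j = w0) → (∀ j ∈ Jf, w' j = w0') →
      StrictAntiOn w0' (Set.Ioi 0) →
      ∀ j ∈ Jf, ∀ k ∈ Jf, c k < c j → p j - c j < p k - c k) := by
  have foc : ∀ j ∈ Jf, p j - c j + (w' j (p j))⁻¹ = profit17 w v θ c Jf p := fun j hj =>
    markup_add_inv_eq_profit17 (fun i => (hp i).le) hmax hj (hp j) (hd j _ (hp j))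
  refine ⟨fun j hj k hk => by linarith [foc j hj, foc k hk], ?_⟩
  intro w0 w0' _ hw0' hanti j hj k hk hck
  refine markup_lt_of_cost_lt hanti (hp j) (hp k) ?_ hck ?_
  · rw [← hw0' k hk]
    exact hneg k _ (hp k)
  · simpa only [hw0' j hj, hw0' k hk] using (foc j hj).trans (foc k hk).symm

theorem stmt_17 {J : ℕ} (w w' : Fin J → ℝ → ℝ) (v : Fin J → ℝ) (θ : ℝ)
    (c : Fin J → ℝ) (Jf : Finset (Fin J)) (hc : ∀ j, 0 ≤ c j)
    (hd : ∀ k : Fin J, ∀ x > (0:ℝ), HasDerivAt (w k) (w' k x) x)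
    (hneg : ∀ k : Fin J, ∀ x > (0:ℝ), w' k x < 0)
    (p : Fin J → ℝ) (hp : ∀ i, 0 < p i)
    -- p_f are (interior) profit-maximizing prices for firm f
    (hmax : ∀ q : Fin J → ℝ, (∀ i, i ∉ Jf → q i = p i) → (∀ i, 0 ≤ q i) →
      profit17 w v θ c Jf q ≤ profit17 w v θ c Jf p) :
    -- markup-difference identity
    (∀ j ∈ Jf, ∀ k ∈ Jf,
      (p j - c j) - (p k - c k) = -((w' j (p j))⁻¹ - (w' k (p k))⁻¹)) ∧
    -- common separable, strictly concave-in-price utility: higher cost ⇒ lower markup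
    (∀ w0 w0' : ℝ → ℝ, (∀ j ∈ Jf, w j = w0) → (∀ j ∈ Jf, w' j = w0') →
      StrictAntiOn w0' (Set.Ioi 0) →
      ∀ j ∈ Jf, ∀ k ∈ Jf, c k < c j → p j - c j < p k - c k) :=
  stmt_17_general w w' v θ c Jf hd hneg p hp hmax
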